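/- arXiv:2211.08959 — 5 statements merged into one kernel-verified Lean document; each statement's English description precedes it below -/
import Mathlib

section
/- Let $\nu$ be a $\sigma$-finite measure, $Q$ a $\nu$-reversible Markov kernel on a measurable space $(\mathsf{E},\mathscr{E})$, and $\pi$ a probability measure with density $\varpi = d\pi/d\nu$. Let $P$ be the Metropolis kernel with proposal $Q$ and acceptance function $\alpha(x,y)=\min\{1,\varpi(y)/\varpi(x)\}$, and let $\alpha_0 := \inf_x \int Q(x,dy)\,\alpha(x,y)$. Then for all $x,y\in\mathsf{E}$, $\|P(x,\cdot)-P(y,\cdot)\|_{TV} \le \|Q(x,\cdot)-Q(y,\cdot)\|_{TV} + 1 - \alpha_0$. -/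
/-!
If `ϖ y ≤ ϖ x`, then `α(x, ·) ≤ α(y, ·)` pointwise, so for every measurable `A` the accepted
mass of `P(x, ·)` on `A` exceeds that of `P(y, ·)` by at most
`∫_A α(x, ·) dQ(x, ·) - ∫_A α(x, ·) dQ(y, ·) ≤ ‖Q(x, ·) - Q(y, ·)‖_TV` (a `[0, 1]`-valued integrand
against a Hahn decomposition), while the rejected mass `1 - α(x)` is at most `1 - α₀`.
Complements turn this one-sided bound into the bound on the total variation distance.
-/

open MeasureTheory ProbabilityTheory Real
open scoped ENNReal

noncomputable section

def tvDist {E : Type*} [MeasurableSpace E] (μ ν : Measure E) : ℝ :=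
  ⨆ A : {A : Set E // MeasurableSet A}, |(μ A).toReal - (ν A).toReal|

open Set Filter

section TotalVariation

variable {E : Type*} [MeasurableSpace E]

lemma tvDist_comm (μ ν : Measure E) : tvDist μ ν = tvDist ν μ :=
  iSup_congr fun _ => abs_sub_comm _ _

lemma bddAbove_range_abs_measureReal_sub (μ ν : Measure E) [IsFiniteMeasure μ]
    [IsFiniteMeasure ν] :
    BddAbove (range fun A : {A : Set E // MeasurableSet A} => |(μ A).toReal - (ν A).toReal|) := by
  refine ⟨μ.real univ + ν.real univ, ?_⟩
  rintro _ ⟨A, rfl⟩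
  change |μ.real A - ν.real A| ≤ _
  have hμ := measureReal_mono (μ := μ) (subset_univ (A : Set E))
  have hν := measureReal_mono (μ := ν) (subset_univ (A : Set E))
  rw [abs_sub_le_iff]
  constructor <;> linarith [measureReal_nonneg (μ := μ) (s := A),
    measureReal_nonneg (μ := ν) (s := A)]

lemma measureReal_sub_le_tvDist (μ ν : Measure E) [IsFiniteMeasure μ] [IsFiniteMeasure ν]
    {A : Set E} (hA : MeasurableSet A) : μ.real A - ν.real A ≤ tvDist μ ν :=
  (le_abs_self _).trans
    (le_ciSup (bddAbove_range_abs_measureReal_sub μ ν) (⟨A, hA⟩ : {A : Set E // MeasurableSet A}))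

lemma tvDist_le_of_forall_measureReal_sub_le {μ ν : Measure E} [IsProbabilityMeasure μ]
    [IsProbabilityMeasure ν] {c : ℝ} (h : ∀ A, MeasurableSet A → μ.real A - ν.real A ≤ c) :
    tvDist μ ν ≤ c := by
  have : Nonempty {A : Set E // MeasurableSet A} := ⟨⟨∅, MeasurableSet.empty⟩⟩
  refine ciSup_le fun ⟨A, hA⟩ => abs_sub_le_iff.2 ⟨h A hA, ?_⟩
  have hc := h Aᶜ hA.compl
  rw [probReal_compl_eq_one_sub hA, probReal_compl_eq_one_sub hA] at hc
  change ν.real A - μ.real A ≤ c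
  linarith

lemma integrable_of_nonneg_of_le_one (μ : Measure E) [IsFiniteMeasure μ] {f : E → ℝ}
    (hf : Measurable f) (h0 : ∀ z, 0 ≤ f z) (h1 : ∀ z, f z ≤ 1) : Integrable f μ :=
  .of_bound hf.aestronglyMeasurable 1 (ae_of_all _ fun z => by
    rw [Real.norm_eq_abs, abs_of_nonneg (h0 z)]; exact h1 z)

lemma Measure.restrict_le_restrict_of_forall_subset {μ ν : Measure E} {s : Set E}
    (hs : MeasurableSet s) (h : ∀ t, MeasurableSet t → t ⊆ s → μ t ≤ ν t) :
    μ.restrict s ≤ ν.restrict s :=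
  Measure.le_iff.2 fun t ht => by
    rw [Measure.restrict_apply ht, Measure.restrict_apply ht]
    exact h _ (ht.inter hs) inter_subset_right

lemma setIntegral_sub_setIntegral_le_tvDist (μ ν : Measure E) [IsFiniteMeasure μ]
    [IsFiniteMeasure ν] {f : E → ℝ} (hf : Measurable f) (h0 : ∀ z, 0 ≤ f z)
    (h1 : ∀ z, f z ≤ 1) {A : Set E} (hA : MeasurableSet A) :
    ∫ z in A, f z ∂μ - ∫ z in A, f z ∂ν ≤ tvDist μ ν := by
  obtain ⟨s, hs, hνμ, hμν⟩ := hahn_decomposition μ ν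
  have hfμ := integrable_of_nonneg_of_le_one μ hf h0 h1
  have hfν := integrable_of_nonneg_of_le_one ν hf h0 h1
  have h1f : ∀ z, 0 ≤ 1 - f z := fun z => sub_nonneg.2 (h1 z)
  have hneg : ∫ z in A \ s, f z ∂μ ≤ ∫ z in A \ s, f z ∂ν :=
    integral_mono_measure
      (Measure.restrict_le_restrict_of_forall_subset (hA.diff hs) fun t ht hts =>
        hμν t ht (hts.trans (sdiff_subset_compl A s)))
      (ae_of_all _ h0) hfν.integrableOn
  have hpos : ∫ z in A ∩ s, (1 - f z) ∂ν ≤ ∫ z in A ∩ s, (1 - f z) ∂μ :=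
    integral_mono_measure
      (Measure.restrict_le_restrict_of_forall_subset (hA.inter hs) fun t ht hts =>
        hνμ t ht (hts.trans inter_subset_right))
      (ae_of_all _ h1f) ((integrable_const 1).sub hfμ).integrableOn
  rw [integral_sub (integrable_const 1).integrableOn hfν.integrableOn,
    integral_sub (integrable_const 1).integrableOn hfμ.integrableOn, setIntegral_const,
    setIntegral_const, smul_eq_mul, smul_eq_mul, mul_one, mul_one] at hpos
  have htv := measureReal_sub_le_tvDist μ ν (hA.inter hs)
  have hdisj : Disjoint (A ∩ s) (A \ s) := disjoint_sdiff_right.mono_left inter_subset_right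
  rw [← inter_union_sdiff A s, setIntegral_union hdisj (hA.diff hs) hfμ.integrableOn
    hfμ.integrableOn, setIntegral_union hdisj (hA.diff hs) hfν.integrableOn hfν.integrableOn]
  linarith

end TotalVariation

section Metropolis

variable {E : Type*} {ϖ : E → ℝ}

def acceptance (ϖ : E → ℝ) (x y : E) : ℝ := min 1 (ϖ y / ϖ x)

lemma acceptance_nonneg (hϖ : ∀ z, 0 ≤ ϖ z) (x y : E) : 0 ≤ acceptance ϖ x y :=
  le_min zero_le_one (div_nonneg (hϖ y) (hϖ x))

lemma acceptance_le_one {x : E} (y : E) : acceptance ϖ x y ≤ 1 := min_le_left _ _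

lemma acceptance_le_acceptance (hϖ : ∀ z, 0 ≤ ϖ z) {x y : E} (hy : 0 < ϖ y) (hyx : ϖ y ≤ ϖ x)
    (z : E) : acceptance ϖ x z ≤ acceptance ϖ y z :=
  min_le_min le_rfl (div_le_div_of_nonneg_left (hϖ z) hy hyx)

variable [MeasurableSpace E]

def acceptanceRate (Q : Kernel E E) (ϖ : E → ℝ) (x : E) : ℝ := ∫ y, acceptance ϖ x y ∂(Q x)

lemma measurable_acceptance (hϖ : Measurable ϖ) (x : E) : Measurable (acceptance ϖ x) :=
  measurable_const.min (hϖ.div_const _)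

lemma integrable_acceptance (μ : Measure E) [IsFiniteMeasure μ] (hϖm : Measurable ϖ)
    (hϖ : ∀ z, 0 ≤ ϖ z) (x : E) : Integrable (acceptance ϖ x) μ :=
  integrable_of_nonneg_of_le_one μ (measurable_acceptance hϖm x) (acceptance_nonneg hϖ x)
    acceptance_le_one

lemma acceptanceRate_nonneg (Q : Kernel E E) (hϖ : ∀ z, 0 ≤ ϖ z) (x : E) :
    0 ≤ acceptanceRate Q ϖ x :=
  integral_nonneg (acceptance_nonneg hϖ x)

lemma acceptanceRate_le_one (Q : Kernel E E) [IsMarkovKernel Q] (hϖm : Measurable ϖ)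
    (hϖ : ∀ z, 0 ≤ ϖ z) (x : E) : acceptanceRate Q ϖ x ≤ 1 :=
  calc acceptanceRate Q ϖ x ≤ ∫ _, (1 : ℝ) ∂(Q x) :=
        integral_mono (integrable_acceptance _ hϖm hϖ x) (integrable_const 1) acceptance_le_one
    _ = 1 := by simp

def IsMetropolisKernel (Q : Kernel E E) (ϖ : E → ℝ) (P : Kernel E E) : Prop :=
  ∀ x A, MeasurableSet A → P x A = (∫⁻ y in A, ENNReal.ofReal (acceptance ϖ x y) ∂(Q x)) +
    A.indicator (fun _ => ENNReal.ofReal (1 - acceptanceRate Q ϖ x)) x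

variable {Q P : Kernel E E} [IsMarkovKernel Q]

lemma measureReal_metropolis (hϖm : Measurable ϖ) (hϖ : ∀ z, 0 ≤ ϖ z)
    (hP : IsMetropolisKernel Q ϖ P) (x : E) {A : Set E} (hA : MeasurableSet A) :
    (P x).real A =
      ∫ y in A, acceptance ϖ x y ∂(Q x) + A.indicator (fun _ => 1 - acceptanceRate Q ϖ x) x := by
  rw [Measure.real, hP x A hA, ← ofReal_integral_eq_lintegral_ofReal
    (integrable_acceptance _ hϖm hϖ x).integrableOn
    (ae_of_all _ (acceptance_nonneg hϖ x))]
  have hacc : 0 ≤ ∫ y in A, acceptance ϖ x y ∂(Q x) := integral_nonneg (acceptance_nonneg hϖ x)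
  by_cases hx : x ∈ A
  · rw [indicator_of_mem hx, indicator_of_mem hx, ← ENNReal.ofReal_add hacc
      (sub_nonneg.2 (acceptanceRate_le_one Q hϖm hϖ x)), ENNReal.toReal_ofReal
      (add_nonneg hacc (sub_nonneg.2 (acceptanceRate_le_one Q hϖm hϖ x)))]
  · rw [indicator_of_notMem hx, indicator_of_notMem hx, add_zero, add_zero,
      ENNReal.toReal_ofReal hacc]

lemma measureReal_metropolis_sub_le (hϖm : Measurable ϖ) (hϖpos : ∀ z, 0 < ϖ z)
    (hP : IsMetropolisKernel Q ϖ P) {α₀ : ℝ} {x y : E} (hα₀ : α₀ ≤ acceptanceRate Q ϖ x)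
    (hyx : ϖ y ≤ ϖ x) {A : Set E} (hA : MeasurableSet A) :
    (P x).real A - (P y).real A ≤ tvDist (Q x) (Q y) + 1 - α₀ := by
  have hϖ : ∀ z, 0 ≤ ϖ z := fun z => (hϖpos z).le
  rw [measureReal_metropolis hϖm hϖ hP x hA, measureReal_metropolis hϖm hϖ hP y hA]
  have hproposal := setIntegral_sub_setIntegral_le_tvDist (Q x) (Q y)
    (measurable_acceptance hϖm x) (acceptance_nonneg hϖ x) acceptance_le_one hA
  have hacceptance : ∫ z in A, acceptance ϖ x z ∂(Q y) ≤ ∫ z in A, acceptance ϖ y z ∂(Q y) :=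
    setIntegral_mono (integrable_acceptance _ hϖm hϖ x).integrableOn
      (integrable_acceptance _ hϖm hϖ y).integrableOn
      (acceptance_le_acceptance hϖ (hϖpos y) hyx)
  have hreject_x : A.indicator (fun _ => 1 - acceptanceRate Q ϖ x) x ≤ 1 - α₀ :=
    indicator_apply_le' (fun _ => by linarith) fun _ => by
      linarith [acceptanceRate_le_one Q hϖm hϖ x]
  have hreject_y : 0 ≤ A.indicator (fun _ => 1 - acceptanceRate Q ϖ y) y :=
    indicator_nonneg (fun _ _ => sub_nonneg.2 (acceptanceRate_le_one Q hϖm hϖ y)) y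
  linarith

end Metropolis

theorem stmt2_general {E : Type*} [MeasurableSpace E]
    (Q : Kernel E E) [IsMarkovKernel Q]
    (ϖ : E → ℝ) (hϖmeas : Measurable ϖ) (hϖpos : ∀ x, 0 < ϖ x)
    (P : Kernel E E) [IsMarkovKernel P]
    (hP : ∀ (x : E) (A : Set E), MeasurableSet A →
      P x A = (∫⁻ y in A, ENNReal.ofReal (min 1 (ϖ y / ϖ x)) ∂(Q x)) +
        A.indicator (fun _ => ENNReal.ofReal (1 - ∫ y, min 1 (ϖ y / ϖ x) ∂(Q x))) x)
    (α₀ : ℝ) (hα₀ : α₀ = ⨅ x : E, ∫ y, min 1 (ϖ y / ϖ x) ∂(Q x))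
    (x y : E) :
    tvDist (P x) (P y) ≤ tvDist (Q x) (Q y) + 1 - α₀ := by
  have hϖ : ∀ z, 0 ≤ ϖ z := fun z => (hϖpos z).le
  have hα₀_le : ∀ u, α₀ ≤ acceptanceRate Q ϖ u := fun u =>
    hα₀ ▸ ciInf_le ⟨0, by rintro _ ⟨v, rfl⟩; exact acceptanceRate_nonneg Q hϖ v⟩ u
  have hone_sided : ∀ u v, ϖ v ≤ ϖ u → tvDist (P u) (P v) ≤ tvDist (Q u) (Q v) + 1 - α₀ :=
    fun u v hvu => tvDist_le_of_forall_measureReal_sub_le fun _ hA =>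
      measureReal_metropolis_sub_le hϖmeas hϖpos hP (hα₀_le u) hvu hA
  rcases le_total (ϖ y) (ϖ x) with h | h
  · exact hone_sided x y h
  · rw [tvDist_comm, tvDist_comm (Q x)]
    exact hone_sided y x h

/-- A close-coupling bound for Metropolis kernels: the total variation distance between
`P(x,·)` and `P(y,·)` is at most that of the proposals plus `1 - α₀`. -/
theorem stmt2 {E : Type*} [MeasurableSpace E]
    (ν : Measure E) [SigmaFinite ν]
    (Q : Kernel E E) [IsMarkovKernel Q]
    (hrev : ∀ A B : Set E, MeasurableSet A → MeasurableSet B →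
      ∫⁻ x in A, Q x B ∂ν = ∫⁻ x in B, Q x A ∂ν)
    (pm : Measure E) [IsProbabilityMeasure pm]
    (ϖ : E → ℝ) (hϖmeas : Measurable ϖ) (hϖpos : ∀ x, 0 < ϖ x)
    (hdens : pm = ν.withDensity fun x => ENNReal.ofReal (ϖ x))
    (P : Kernel E E) [IsMarkovKernel P]
    (hP : ∀ (x : E) (A : Set E), MeasurableSet A →
      P x A = (∫⁻ y in A, ENNReal.ofReal (min 1 (ϖ y / ϖ x)) ∂(Q x)) +
        A.indicator (fun _ => ENNReal.ofReal (1 - ∫ y, min 1 (ϖ y / ϖ x) ∂(Q x))) x)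
    (α₀ : ℝ) (hα₀ : α₀ = ⨅ x : E, ∫ y, min 1 (ϖ y / ϖ x) ∂(Q x))
    (x y : E) :
    tvDist (P x) (P y) ≤ tvDist (Q x) (Q y) + 1 - α₀ :=
  stmt2_general Q ϖ hϖmeas hϖpos P hP α₀ hα₀ x y
end
end

section
/- Let $U:\mathbb{R}^d\to\mathbb{R}$ be $L$-smooth and differentiable, and let $\sigma = \varsigma L^{-1/2} d^{-1/2}$ for $\varsigma>0$. Then the RWM average acceptance probability satisfies $\alpha_0 := \inf_x \int \mathcal{N}(dz;0,I_d)\min\{1,\exp(-(U(x+\sigma z)-U(x)))\} \ge \frac{1}{2}\exp(-\varsigma^2/2)$. -/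
open MeasureTheory Real
open scoped ENNReal RealInnerProductSpace

noncomputable section

abbrev Evec (d : ℕ) := EuclideanSpace ℝ (Fin d)

def gaussDensity (d : ℕ) (m : Evec d) (s : ℝ) (x : Evec d) : ℝ :=
  (2 * π * s) ^ (-(d : ℝ) / 2) * Real.exp (-‖x - m‖ ^ 2 / (2 * s))

/-- The standard Gaussian measure `𝒩(0, I_d)` on `ℝ^d`. -/
def stdGauss (d : ℕ) : Measure (Evec d) :=
  volume.withDensity fun z => ENNReal.ofReal (gaussDensity d 0 1 z)

lemma integrable_rexp_neg_mul_sq_norm_evec {d : ℕ} {b : ℝ} (hb : 0 < b) :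
    Integrable (fun v : Evec d => rexp (-b * ‖v‖^2)) := by
  have h := (GaussianFourier.integrable_cexp_neg_mul_sq_norm_add (V := Evec d)
    (show 0 < ((b:ℂ)).re by simpa using hb) 0 (0 : Evec d)).re
  simpa [← Complex.ofReal_pow, ← Complex.ofReal_mul, ← Complex.ofReal_neg,
    Complex.exp_ofReal_re] using h

lemma stdGauss_integral_eq {d : ℕ} (g : Evec d → ℝ) :
    ∫ z, g z ∂stdGauss d = ∫ z, gaussDensity d 0 1 z * g z := by
  have hmeas : Measurable (fun z : Evec d => (gaussDensity d 0 1 z).toNNReal) := by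
    apply Measurable.real_toNNReal
    unfold gaussDensity
    fun_prop
  have : stdGauss d = volume.withDensity fun z => ((gaussDensity d 0 1 z).toNNReal : ℝ≥0∞) := rfl
  rw [this, integral_withDensity_eq_integral_smul hmeas]
  congr 1 with z
  rw [NNReal.smul_def, Real.coe_toNNReal _ (by unfold gaussDensity; positivity), smul_eq_mul]

set_option maxHeartbeats 1000000 in
/-- With `σ = ς L^{-1/2} d^{-1/2}` and an `L`-smooth potential, the infimal RWM
acceptance probability is at least `(1/2) exp(-ς²/2)`. -/
theorem stmt4 {d : ℕ} (hd : 0 < d) (L ς : ℝ) (hL : 0 < L) (hς : 0 < ς)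
    (U : Evec d → ℝ) (hU : Differentiable ℝ U)
    (hsmooth : ∀ x h : Evec d, U (x + h) - U x - ⟪gradient U x, h⟫ ≤ L / 2 * ‖h‖ ^ 2)
    (σ : ℝ) (hσ : σ = ς * L ^ (-(1 : ℝ) / 2) * (d : ℝ) ^ (-(1 : ℝ) / 2)) :
    (1 / 2) * Real.exp (-ς ^ 2 / 2) ≤
      ⨅ x : Evec d, ∫ z, min 1 (Real.exp (-(U (x + σ • z) - U x))) ∂stdGauss d := by
  have hd' : (0:ℝ) < d := Nat.cast_pos.mpr hd
  have hσpos : 0 < σ := by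
    rw [hσ]
    positivity
  have hLσ : L * σ ^ 2 = ς ^ 2 / d := by
    rw [hσ, mul_pow, mul_pow, ← Real.rpow_natCast (L ^ (-(1:ℝ)/2)) 2,
      ← Real.rpow_natCast ((d:ℝ) ^ (-(1:ℝ)/2)) 2, ← Real.rpow_mul hL.le,
      ← Real.rpow_mul hd'.le]
    norm_num
    rw [Real.rpow_neg_one, Real.rpow_neg_one]
    field_simp
  set c : ℝ := L * σ ^ 2 / 2 with hc
  have hcval : c = ς^2 / (2*d) := by rw [hc, hLσ]; ring
  have hcpos : 0 < c := by rw [hcval]; positivity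
  have hρ_eq : ∀ z : Evec d, gaussDensity d 0 1 z
      = (2*π)^(-(d:ℝ)/2) * rexp (-(1/2) * ‖z‖^2) := by
    intro z
    unfold gaussDensity
    rw [mul_one, sub_zero]
    congr 2
    ring
  have hρ_nonneg : ∀ z : Evec d, 0 ≤ gaussDensity d 0 1 z := by
    intro z; unfold gaussDensity; positivity
  have hρcont : Continuous (gaussDensity d 0 1) := by
    unfold gaussDensity; fun_prop
  have hcomb : ∀ z : Evec d, gaussDensity d 0 1 z * rexp (-c * ‖z‖^2)
      = (2*π)^(-(d:ℝ)/2) * rexp (-(1/2 + c) * ‖z‖^2) := by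
    intro z
    rw [hρ_eq z, mul_assoc, ← Real.exp_add]
    congr 2
    ring
  apply le_ciInf
  intro x
  rw [stdGauss_integral_eq]
  set m : Evec d → ℝ := fun z => min 1 (rexp (-(U (x + σ • z) - U x))) with hm
  set g := gradient U x with hg
  have key : ∀ w : Evec d, ⟪g, w⟫ ≤ 0 → rexp (-c * ‖w‖^2) ≤ m w := by
    intro w hw
    have h1 := hsmooth x (σ • w)
    have hin : ⟪g, σ • w⟫ = σ * ⟪g, w⟫ := real_inner_smul_right g w σ
    have hns : ‖σ • w‖^2 = σ^2 * ‖w‖^2 := by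
      rw [norm_smul, Real.norm_eq_abs, abs_of_pos hσpos, mul_pow]
    have hip : ⟪g, σ • w⟫ ≤ 0 := by
      rw [hin]; exact mul_nonpos_of_nonneg_of_nonpos hσpos.le hw
    have hΔ : U (x + σ • w) - U x ≤ c * ‖w‖^2 := by
      rw [← hg] at h1
      nlinarith [h1]
    have hle0 : -c * ‖w‖^2 ≤ 0 := by nlinarith [sq_nonneg ‖w‖]
    refine le_min (Real.exp_le_one_iff.mpr hle0) (Real.exp_le_exp.mpr ?_)
    linarith
  have hm_nonneg : ∀ z, 0 ≤ m z := fun z => le_min zero_le_one (Real.exp_pos _).le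
  have hm_le1 : ∀ z, m z ≤ 1 := fun z => min_le_left _ _
  have hUc : Continuous U := hU.continuous
  have hmcont : Continuous m := by
    apply Continuous.min continuous_const
    fun_prop
  -- integrability
  have hρint : Integrable (fun z : Evec d => gaussDensity d 0 1 z) := by
    simp_rw [hρ_eq]
    exact (integrable_rexp_neg_mul_sq_norm_evec one_half_pos).const_mul _
  have hbound : ∀ (f : Evec d → ℝ), Continuous f → (∀ z, 0 ≤ f z) → (∀ z, f z ≤ 1) →
      Integrable (fun z : Evec d => gaussDensity d 0 1 z * f z) := by
    intro f hfc hf0 hf1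
    refine hρint.mono' ((hρcont.mul hfc).aestronglyMeasurable) (ae_of_all _ fun z => ?_)
    rw [Real.norm_eq_abs, abs_of_nonneg (mul_nonneg (hρ_nonneg z) (hf0 z))]
    nlinarith [hρ_nonneg z, hf0 z, hf1 z]
  have hint1 : Integrable (fun z : Evec d => gaussDensity d 0 1 z * m z) :=
    hbound m hmcont hm_nonneg hm_le1
  have hint2 : Integrable (fun z : Evec d => gaussDensity d 0 1 z * m (-z)) :=
    hbound (fun z => m (-z)) (hmcont.comp continuous_neg)
      (fun z => hm_nonneg _) (fun z => hm_le1 _)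
  have hint3 : Integrable (fun z : Evec d => gaussDensity d 0 1 z * rexp (-c * ‖z‖^2)) := by
    simp_rw [hcomb]
    exact (integrable_rexp_neg_mul_sq_norm_evec (by positivity)).const_mul _
  -- symmetry
  have hρ_neg : ∀ z : Evec d, gaussDensity d 0 1 (-z) = gaussDensity d 0 1 z := by
    intro z; rw [hρ_eq, hρ_eq, norm_neg]
  have hsym : ∫ z, gaussDensity d 0 1 z * m z = ∫ z, gaussDensity d 0 1 z * m (-z) := by
    conv_lhs => rw [← integral_neg_eq_self (fun z => gaussDensity d 0 1 z * m z) volume]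
    simp_rw [hρ_neg]
  have h2I : 2 * ∫ z, gaussDensity d 0 1 z * m z
      = ∫ z, (gaussDensity d 0 1 z * m z + gaussDensity d 0 1 z * m (-z)) := by
    rw [integral_add hint1 hint2, ← hsym]
    ring
  have hmono : ∫ z, gaussDensity d 0 1 z * rexp (-c * ‖z‖^2)
      ≤ ∫ z, (gaussDensity d 0 1 z * m z + gaussDensity d 0 1 z * m (-z)) := by
    apply integral_mono hint3 (hint1.add hint2)
    intro z
    simp only [Pi.add_apply]
    rcases le_or_gt ⟪g, z⟫ 0 with h | h
    · have hk := mul_le_mul_of_nonneg_left (key z h) (hρ_nonneg z)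
      have h2 := mul_nonneg (hρ_nonneg z) (hm_nonneg (-z))
      linarith
    · have hk := key (-z) (by rw [inner_neg_right]; linarith)
      rw [norm_neg] at hk
      have hk2 := mul_le_mul_of_nonneg_left hk (hρ_nonneg z)
      have h2 := mul_nonneg (hρ_nonneg z) (hm_nonneg z)
      linarith
  -- value of the Gaussian integral
  have hval : ∫ z : Evec d, gaussDensity d 0 1 z * rexp (-c * ‖z‖^2)
      = (1 + 2*c) ^ (-((d:ℝ)/2)) := by
    simp_rw [hcomb]
    rw [MeasureTheory.integral_const_mul,
      GaussianFourier.integral_rexp_neg_mul_sq_norm (by positivity : (0:ℝ) < 1/2 + c)]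
    have hfr : (Module.finrank ℝ (Evec d) : ℝ) = (d : ℝ) := by
      norm_num [finrank_euclideanSpace]
    rw [hfr]
    have h1 : π / (1/2 + c) = (2*π) / (1+2*c) := by
      rw [div_eq_div_iff (by positivity) (by positivity)]
      ring
    rw [h1, Real.div_rpow (by positivity) (by positivity), neg_div,
      Real.rpow_neg (by positivity : (0:ℝ) ≤ 2*π),
      Real.rpow_neg (by positivity : (0:ℝ) ≤ 1+2*c)]
    field_simp
  -- final estimate
  have hfin : rexp (-ς^2/2) ≤ (1 + 2*c) ^ (-((d:ℝ)/2)) := by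
    rw [Real.rpow_def_of_pos (by positivity)]
    apply Real.exp_le_exp.mpr
    have hlog : Real.log (1+2*c) ≤ 2*c := by
      have := Real.log_le_sub_one_of_pos (show (0:ℝ) < 1+2*c by positivity)
      linarith
    have h2 : Real.log (1+2*c) * ((d:ℝ)/2) ≤ 2*c * ((d:ℝ)/2) :=
      mul_le_mul_of_nonneg_right hlog (by positivity)
    have h3 : 2*c * ((d:ℝ)/2) = ς^2/2 := by
      rw [hcval]
      field_simp
    rw [mul_neg]
    linarith
  have hfinal := le_trans hmono (le_of_eq h2I.symm)
  rw [hval] at hfinal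
  linarith
end
end

section
/- Let $\pi \propto e^{-U}$ on $\mathbb{R}^d$ with $U$ $m$-strongly convex and differentiable, and let $P$ be the RWM kernel with Gaussian proposal $\mathcal{N}(x, \sigma^2 I_d)$. Then the acceptance probability satisfies, for every $x$: $\alpha(x) = \int\mathcal{N}(dz;0,I_d)\min\{1, \exp(-(U(x+\sigma z)-U(x)))\} \le (1+m\sigma^2)^{-d/2}\cdot\exp\left(\frac{1}{2}\cdot\frac{\sigma^2|\nabla U(x)|^2}{1+m\sigma^2}\right)$. -/
open MeasureTheory Real
open scoped ENNReal RealInnerProductSpace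

noncomputable section

lemma integrable_rexp_gauss (d : ℕ) {b : ℝ} (hb : 0 < b) (c : ℝ) (w : Evec d) :
    Integrable (fun v : Evec d => Real.exp (-b * ‖v‖ ^ 2 + c * ⟪w, v⟫)) := by
  have h := GaussianFourier.integrable_cexp_neg_mul_sq_norm_add (V := Evec d)
    (b := (b : ℂ)) (by simpa using hb) (c : ℂ) w
  refine h.re.congr (Filter.Eventually.of_forall fun v => ?_)
  have e : (-(b:ℂ) * (‖v‖:ℂ) ^ 2 + (c:ℂ) * ((⟪w, v⟫ : ℝ) : ℂ)) =
      (((-b * ‖v‖ ^ 2 + c * ⟪w, v⟫ : ℝ)) : ℂ) := by push_cast; ring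
  simp only [e, RCLike.re_to_complex, Complex.exp_ofReal_re]

lemma integral_rexp_gauss (d : ℕ) {b : ℝ} (hb : 0 < b) (c : ℝ) (w : Evec d) :
    ∫ v : Evec d, Real.exp (-b * ‖v‖ ^ 2 + c * ⟪w, v⟫) =
      (π / b) ^ ((d : ℝ) / 2) * Real.exp (c ^ 2 * ‖w‖ ^ 2 / (4 * b)) := by
  have h := GaussianFourier.integral_cexp_neg_mul_sq_norm_add (V := Evec d)
    (b := (b : ℂ)) (by simpa using hb) (c : ℂ) w
  rw [finrank_euclideanSpace_fin] at h
  rw [← Complex.ofReal_inj]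
  have h2 : (fun v : Evec d => Complex.exp (-(b:ℂ) * ‖v‖ ^ 2 + (c:ℂ) * ⟪w, v⟫)) =
      fun v => ((Real.exp (-b * ‖v‖ ^ 2 + c * ⟪w, v⟫) : ℝ) : ℂ) := by
    funext v
    push_cast [Complex.ofReal_exp]
    ring_nf
  rw [h2] at h
  rw [show (((∫ v : Evec d, Real.exp (-b * ‖v‖ ^ 2 + c * ⟪w, v⟫)) : ℝ) : ℂ) =
      ∫ v : Evec d, ((Real.exp (-b * ‖v‖ ^ 2 + c * ⟪w, v⟫) : ℝ) : ℂ) from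
      (integral_ofReal (𝕜 := ℂ)).symm, h]
  rw [Complex.ofReal_mul, Complex.ofReal_exp, Complex.ofReal_cpow
    (le_of_lt (div_pos pi_pos hb))]
  push_cast
  ring_nf

/-- Pointwise upper bound on the RWM acceptance probability under `m`-strong convexity. -/
theorem stmt11 {d : ℕ} (m σ : ℝ) (hm : 0 < m) (hσ : 0 < σ)
    (U : Evec d → ℝ) (hU : Differentiable ℝ U)
    (hconv : ∀ x h : Evec d, m / 2 * ‖h‖ ^ 2 ≤ U (x + h) - U x - ⟪gradient U x, h⟫)
    (x : Evec d) :
    ∫ z, min 1 (Real.exp (-(U (x + σ • z) - U x))) ∂stdGauss d ≤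
      (1 + m * σ ^ 2) ^ (-(d : ℝ) / 2) *
        Real.exp ((1 / 2) * (σ ^ 2 * ‖gradient U x‖ ^ 2 / (1 + m * σ ^ 2))) := by
  set g := gradient U x with hg
  set w : Evec d := σ • g with hw
  have ha : (0:ℝ) < 1 + m * σ ^ 2 := by positivity
  set G : Evec d → ℝ := fun z => Real.exp (-(m * σ ^ 2 / 2) * ‖z‖ ^ 2 + (-1) * ⟪w, z⟫) with hG
  -- measurability of the density
  have hcont : Continuous fun z : Evec d => gaussDensity d 0 1 z := by
    unfold gaussDensity
    fun_prop
  have hmeas : Measurable fun z : Evec d => (gaussDensity d 0 1 z).toNNReal :=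
    hcont.measurable.real_toNNReal
  have hdnn : ∀ z : Evec d, 0 ≤ gaussDensity d 0 1 z := by
    intro z
    unfold gaussDensity
    positivity
  have hstd : stdGauss d =
      volume.withDensity (fun z => ((gaussDensity d 0 1 z).toNNReal : ℝ≥0∞)) := rfl
  -- key: density * G
  have hprod : ∀ z : Evec d, gaussDensity d 0 1 z * G z =
      (2 * π) ^ (-(d : ℝ) / 2) *
        Real.exp (-((1 + m * σ ^ 2) / 2) * ‖z‖ ^ 2 + (-1) * ⟪w, z⟫) := by
    intro z
    simp only [gaussDensity, hG, sub_zero, mul_one]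
    rw [mul_assoc, ← Real.exp_add]
    ring_nf
  have hB : (0:ℝ) < (1 + m * σ ^ 2) / 2 := by positivity
  -- integrability of G w.r.t. stdGauss
  have hGint : Integrable G (stdGauss d) := by
    rw [hstd, integrable_withDensity_iff_integrable_smul hmeas]
    have : (fun z : Evec d => (gaussDensity d 0 1 z).toNNReal • G z) =
        fun z => (2 * π) ^ (-(d : ℝ) / 2) *
          Real.exp (-((1 + m * σ ^ 2) / 2) * ‖z‖ ^ 2 + (-1) * ⟪w, z⟫) := by
      funext z
      rw [NNReal.smul_def, smul_eq_mul, Real.coe_toNNReal _ (hdnn z), hprod z]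
    rw [this]
    exact (integrable_rexp_gauss d hB (-1) w).const_mul _
  -- pointwise bound
  have hpt : ∀ z : Evec d, min 1 (Real.exp (-(U (x + σ • z) - U x))) ≤ G z := by
    intro z
    refine le_trans (min_le_right _ _) ?_
    apply Real.exp_le_exp.2
    have h1 := hconv x (σ • z)
    have h2 : ‖σ • z‖ ^ 2 = σ ^ 2 * ‖z‖ ^ 2 := by
      rw [norm_smul, mul_pow, Real.norm_eq_abs, sq_abs]
    have h3 : ⟪g, σ • z⟫ = ⟪w, z⟫ := by
      rw [hw, real_inner_smul_left, real_inner_smul_right]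
    rw [h2, h3] at h1
    nlinarith [h1]
  -- monotonicity
  have hmono : ∫ z, min 1 (Real.exp (-(U (x + σ • z) - U x))) ∂stdGauss d ≤
      ∫ z, G z ∂stdGauss d := by
    apply integral_mono_of_nonneg ?_ hGint (Filter.Eventually.of_forall hpt)
    apply Filter.Eventually.of_forall
    intro z
    exact le_min zero_le_one (Real.exp_pos _).le
  refine hmono.trans_eq ?_
  -- compute the integral
  rw [hstd, integral_withDensity_eq_integral_smul hmeas]
  have : (fun z : Evec d => (gaussDensity d 0 1 z).toNNReal • G z) =
      fun z => (2 * π) ^ (-(d : ℝ) / 2) *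
        Real.exp (-((1 + m * σ ^ 2) / 2) * ‖z‖ ^ 2 + (-1) * ⟪w, z⟫) := by
    funext z
    rw [NNReal.smul_def, smul_eq_mul, Real.coe_toNNReal _ (hdnn z), hprod z]
  rw [this, integral_const_mul, integral_rexp_gauss d hB (-1) w]
  have hwn : ‖w‖ ^ 2 = σ ^ 2 * ‖g‖ ^ 2 := by
    rw [hw, norm_smul, mul_pow, Real.norm_eq_abs, sq_abs]
  have hπB : π / ((1 + m * σ ^ 2) / 2) = 2 * π / (1 + m * σ ^ 2) := by
    field_simp
  rw [hπB, Real.div_rpow (by positivity) ha.le]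
  have hexp : (-1:ℝ) ^ 2 * ‖w‖ ^ 2 / (4 * ((1 + m * σ ^ 2) / 2)) =
      (1 / 2) * (σ ^ 2 * ‖g‖ ^ 2 / (1 + m * σ ^ 2)) := by
    rw [hwn]; field_simp; ring
  rw [hexp]
  have h2π : (0:ℝ) < 2 * π := by positivity
  have hne : (2 * π) ^ ((d:ℝ) / 2) ≠ 0 := (Real.rpow_pos_of_pos h2π _).ne'
  have hne2 : (1 + m * σ ^ 2) ^ ((d:ℝ) / 2) ≠ 0 := (Real.rpow_pos_of_pos ha _).ne'
  rw [show (-(d:ℝ) / 2) = -((d:ℝ) / 2) by ring]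
  rw [Real.rpow_neg h2π.le, Real.rpow_neg ha.le]
  field_simp
end
end

section
/- Let $\pi\propto e^{-U}$ on $\mathbb{R}^d$ with $U$ $m$-strongly convex, and $P$ the RWM kernel with proposal $\mathcal{N}(x,\sigma^2 I_d)$. Then the conductance satisfies $\Phi_P^* := \inf\{(\pi\otimes P)(A\times A^\complement)/\pi(A) : 0 < \pi(A)\le 1/2\} \le (1+m\sigma^2)^{-d/2}$. -/
/-!
From `x`, a proposal `x + σz` is accepted with probability `min 1 (exp (U x - U (x + σz)))`, and
strong convexity bounds this by `exp (-σ⟪∇U x, z⟫ - mσ²‖z‖²/2)`, whose Gaussian mean is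
`(1 + mσ²)^(-d/2) exp (σ²‖∇U x‖² / (2(1 + mσ²)))`. Take `A = {‖∇U‖ ≤ ε}`. Strong convexity puts
`A` inside the ball of radius `ε/m` about the minimiser `x₀`, which has `π`-mass at most `1/2`
for small `ε` because `π` has no atoms; and `∇U` is continuous at `x₀`, so `A` is a neighbourhood
of `x₀` and has positive mass. Hence the conductance is at most
`(1 + mσ²)^(-d/2) exp (σ²ε² / (2(1 + mσ²)))`, and `ε → 0` gives the claim.
-/

open MeasureTheory Real
open scoped ENNReal RealInnerProductSpace

noncomputable section

/-- The normalized target probability measure `π ∝ e^{-U}`. -/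
def targetProb (d : ℕ) (U : Evec d → ℝ) : Measure (Evec d) :=
  ((volume.withDensity fun x => ENNReal.ofReal (Real.exp (-U x))) Set.univ)⁻¹ •
    (volume.withDensity fun x => ENNReal.ofReal (Real.exp (-U x)))

/-- The conductance `Φ_P^*` of the RWM kernel with proposal `𝒩(x, σ² I_d)`, written via
the explicit form `(π⊗P)(A×Aᶜ) = ∫_A ∫ 1_{Aᶜ}(x+σz) α(x,x+σz) 𝒩(dz) π(dx)`. -/
def rwmConductance (d : ℕ) (U : Evec d → ℝ) (σ : ℝ) : ℝ :=
  sInf {r | ∃ A : Set (Evec d), MeasurableSet A ∧ 0 < targetProb d U A ∧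
    targetProb d U A ≤ 1 / 2 ∧
    r = (∫ x in A, ∫ z, Set.indicator Aᶜ (fun _ => (1 : ℝ)) (x + σ • z) *
          min 1 (Real.exp (-(U (x + σ • z) - U x))) ∂stdGauss d ∂targetProb d U) /
        (targetProb d U A).toReal}

open Filter Topology

section Gaussian

variable {V : Type*} [NormedAddCommGroup V] [InnerProductSpace ℝ V]

theorem ofReal_rexp_neg_mul_sq_norm_add (b c : ℝ) (w v : V) :
    (rexp (-b * ‖v‖ ^ 2 + c * ⟪w, v⟫) : ℂ) =
      Complex.exp (-b * ‖v‖ ^ 2 + c * ⟪w, v⟫) := by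
  push_cast
  rfl

variable [FiniteDimensional ℝ V] [MeasurableSpace V] [BorelSpace V]

theorem integrable_rexp_neg_mul_sq_norm_add {b : ℝ} (hb : 0 < b) (c : ℝ) (w : V) :
    Integrable fun v : V => rexp (-b * ‖v‖ ^ 2 + c * ⟪w, v⟫) := by
  refine (GaussianFourier.integrable_cexp_neg_mul_sq_norm_add (V := V)
    (show 0 < (b : ℂ).re from hb) (c : ℂ) w).norm.congr (.of_forall fun v => ?_)
  simp only [← ofReal_rexp_neg_mul_sq_norm_add, Complex.norm_real,
    norm_of_nonneg (exp_pos _).le]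

theorem integral_rexp_neg_mul_sq_norm_add {b : ℝ} (hb : 0 < b) (c : ℝ) (w : V) :
    ∫ v : V, rexp (-b * ‖v‖ ^ 2 + c * ⟪w, v⟫) =
      (π / b) ^ (Module.finrank ℝ V / 2 : ℝ) * rexp (c ^ 2 * ‖w‖ ^ 2 / (4 * b)) := by
  rw [← Complex.ofReal_inj, ← integral_complex_ofReal]
  simp only [ofReal_rexp_neg_mul_sq_norm_add]
  rw [GaussianFourier.integral_cexp_neg_mul_sq_norm_add (show 0 < (b : ℂ).re from hb),
    Complex.ofReal_mul, ← Complex.ofReal_div, Complex.ofReal_cpow (by positivity)]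
  push_cast
  rfl

end Gaussian

section StdGauss

variable {d : ℕ}

theorem gaussDensity_nonneg (m : Evec d) {s : ℝ} (hs : 0 ≤ s) (x : Evec d) :
    0 ≤ gaussDensity d m s x := by
  unfold gaussDensity
  positivity

theorem measurable_gaussDensity (m : Evec d) (s : ℝ) : Measurable (gaussDensity d m s) := by
  unfold gaussDensity
  fun_prop

theorem integral_stdGauss (g : Evec d → ℝ) :
    ∫ z, g z ∂stdGauss d = ∫ z, gaussDensity d 0 1 z * g z := by
  rw [stdGauss, integral_withDensity_eq_integral_toReal_smul
    (measurable_gaussDensity 0 1).ennreal_ofReal (.of_forall fun _ => ENNReal.ofReal_lt_top)]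
  simp only [ENNReal.toReal_ofReal (gaussDensity_nonneg 0 zero_le_one _), smul_eq_mul]

theorem integrable_stdGauss_iff {g : Evec d → ℝ} :
    Integrable g (stdGauss d) ↔ Integrable fun z => gaussDensity d 0 1 z * g z := by
  rw [stdGauss, integrable_withDensity_iff_integrable_smul'
    (measurable_gaussDensity 0 1).ennreal_ofReal (.of_forall fun _ => ENNReal.ofReal_lt_top)]
  simp only [ENNReal.toReal_ofReal (gaussDensity_nonneg 0 zero_le_one _), smul_eq_mul]

theorem gaussDensity_zero_one_mul_rexp (t : ℝ) (w z : Evec d) :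
    gaussDensity d 0 1 z * rexp (⟪w, z⟫ - t / 2 * ‖z‖ ^ 2) =
      (2 * π) ^ (-(d : ℝ) / 2) * rexp (-((1 + t) / 2) * ‖z‖ ^ 2 + 1 * ⟪w, z⟫) := by
  rw [gaussDensity, mul_one, sub_zero, mul_assoc, ← exp_add]
  ring_nf

theorem integrable_stdGauss_rexp_inner_sub {t : ℝ} (ht : -1 < t) (w : Evec d) :
    Integrable (fun z => rexp (⟪w, z⟫ - t / 2 * ‖z‖ ^ 2)) (stdGauss d) := by
  simp only [integrable_stdGauss_iff, gaussDensity_zero_one_mul_rexp]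
  exact (integrable_rexp_neg_mul_sq_norm_add (by linarith) 1 w).const_mul _

theorem integral_stdGauss_rexp_inner_sub {t : ℝ} (ht : -1 < t) (w : Evec d) :
    ∫ z, rexp (⟪w, z⟫ - t / 2 * ‖z‖ ^ 2) ∂stdGauss d =
      (1 + t) ^ (-(d : ℝ) / 2) * rexp (‖w‖ ^ 2 / (2 * (1 + t))) := by
  have ht' : 0 < 1 + t := by linarith
  simp only [integral_stdGauss, gaussDensity_zero_one_mul_rexp]
  rw [integral_const_mul, integral_rexp_neg_mul_sq_norm_add (by linarith),
    finrank_euclideanSpace_fin, ← mul_assoc]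
  congr 1
  · have h2π : 0 < 2 * π := by positivity
    rw [div_div_eq_mul_div, mul_comm π, div_rpow h2π.le ht'.le, neg_div, rpow_neg h2π.le,
      rpow_neg ht'.le]
    field_simp
  · ring_nf

end StdGauss

theorem isOpenPosMeasure_withDensity {X : Type*} [TopologicalSpace X] [MeasurableSpace X]
    {μ : Measure X} [μ.IsOpenPosMeasure] {f : X → ℝ≥0∞} (hf : AEMeasurable f μ)
    (hpos : ∀ x, f x ≠ 0) : (μ.withDensity f).IsOpenPosMeasure :=
  ⟨fun s hs hne => by
    rw [Ne, withDensity_apply_eq_zero' hf]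
    simpa [hpos] using hs.measure_ne_zero μ hne⟩

section TargetProb

variable {d : ℕ} {U : Evec d → ℝ}

theorem targetProb_absolutelyContinuous : targetProb d U ≪ volume :=
  (withDensity_absolutelyContinuous _ _).smul_left _

theorem isOpenPosMeasure_withDensity_exp_neg (hU : Measurable U) :
    (volume.withDensity fun x => ENNReal.ofReal (rexp (-U x))).IsOpenPosMeasure :=
  isOpenPosMeasure_withDensity (measurable_exp.comp hU.neg).ennreal_ofReal.aemeasurable
    fun x => by simp [exp_pos]

theorem withDensity_exp_neg_univ_ne_top (hint : Integrable fun x => rexp (-U x)) :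
    (volume.withDensity fun x => ENNReal.ofReal (rexp (-U x))) Set.univ ≠ ⊤ := by
  rw [withDensity_apply _ MeasurableSet.univ, Measure.restrict_univ]
  exact hint.lintegral_lt_top.ne

theorem isProbabilityMeasure_targetProb (hU : Measurable U)
    (hint : Integrable fun x => rexp (-U x)) : IsProbabilityMeasure (targetProb d U) := by
  have := isOpenPosMeasure_withDensity_exp_neg hU
  exact ⟨ENNReal.inv_mul_cancel (isOpen_univ.measure_ne_zero _ Set.univ_nonempty)
    (withDensity_exp_neg_univ_ne_top hint)⟩

theorem isOpenPosMeasure_targetProb (hU : Measurable U)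
    (hint : Integrable fun x => rexp (-U x)) : (targetProb d U).IsOpenPosMeasure := by
  have := isOpenPosMeasure_withDensity_exp_neg hU
  exact Measure.isOpenPosMeasure_smul _
    (ENNReal.inv_ne_zero.2 (withDensity_exp_neg_univ_ne_top hint))

end TargetProb

section StrongConvexity

variable {E : Type*} [NormedAddCommGroup E] [InnerProductSpace ℝ E]

theorem exists_norm_le_inner_eq_mul_norm (g : E) {r : ℝ} (hr : 0 ≤ r) :
    ∃ v : E, ‖v‖ ≤ r ∧ ⟪g, v⟫ = r * ‖g‖ := by
  rcases eq_or_ne g 0 with rfl | hg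
  · exact ⟨0, by simpa using hr, by simp⟩
  · refine ⟨(r / ‖g‖) • g, ?_, ?_⟩
    · rw [norm_smul, norm_div, norm_norm, Real.norm_of_nonneg hr,
        div_mul_cancel₀ _ (norm_ne_zero_iff.2 hg)]
    · rw [real_inner_smul_right, real_inner_self_eq_norm_sq]
      field_simp

variable [CompleteSpace E]

def IsGradStronglyConvex (m : ℝ) (U : E → ℝ) : Prop :=
  ∀ x h : E, m / 2 * ‖h‖ ^ 2 ≤ U (x + h) - U x - ⟪gradient U x, h⟫

theorem measurable_gradient [MeasurableSpace E] [BorelSpace E] (U : E → ℝ) :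
    Measurable (gradient U) :=
  (InnerProductSpace.toDual ℝ E).symm.continuous.measurable.comp (measurable_fderiv ℝ U)

namespace IsGradStronglyConvex

variable {m : ℝ} {U : E → ℝ}

theorem inner_gradient_le (hU : IsGradStronglyConvex m U) (hm : 0 ≤ m) (x h : E) :
    ⟪gradient U x, h⟫ ≤ U (x + h) - U x := by
  nlinarith [hU x h, sq_nonneg ‖h‖]

theorem exists_forall_le [ProperSpace E] (hU : IsGradStronglyConvex m U) (hm : 0 < m)
    (hcont : Continuous U) : ∃ x₀, ∀ x, U x₀ ≤ U x := by
  refine hcont.exists_forall_le' 0 ?_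
  filter_upwards [tendsto_norm_cocompact_atTop.eventually_ge_atTop (2 * ‖gradient U 0‖ / m)]
    with x hx
  have hquad := hU 0 x
  have hinner := neg_le_of_abs_le (abs_real_inner_le_norm (gradient U 0) x)
  rw [zero_add] at hquad
  rw [div_le_iff₀ hm] at hx
  nlinarith [mul_nonneg (norm_nonneg x) (sub_nonneg.2 hx)]

theorem mul_norm_sub_le_norm_gradient (hU : IsGradStronglyConvex m U) {x₀ : E}
    (hx₀ : gradient U x₀ = 0) (x : E) : m * ‖x - x₀‖ ≤ ‖gradient U x‖ := by
  rcases (norm_nonneg (x - x₀)).eq_or_lt with hzero | hpos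
  · rw [← hzero, mul_zero]
    exact norm_nonneg _
  have hfrom := hU x₀ (x - x₀)
  have hto := hU x (x₀ - x)
  rw [add_sub_cancel, hx₀, inner_zero_left] at hfrom
  rw [add_sub_cancel, norm_sub_rev, ← neg_sub x x₀, inner_neg_right] at hto
  have hinner := real_inner_le_norm (gradient U x) (x - x₀)
  refine le_of_mul_le_mul_right ?_ hpos
  nlinarith

theorem tendsto_gradient_nhds_zero (hU : IsGradStronglyConvex m U) (hm : 0 ≤ m) {x₀ : E}
    (hx₀ : ∀ x, U x₀ ≤ U x) (hd : DifferentiableAt ℝ U x₀) :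
    Tendsto (gradient U) (𝓝 x₀) (𝓝 0) := by
  have hmin : IsLocalMin U x₀ := Eventually.of_forall hx₀
  have hderiv : HasFDerivAt U (0 : E →L[ℝ] ℝ) x₀ := hmin.fderiv_eq_zero ▸ hd.hasFDerivAt
  rw [Metric.tendsto_nhds]
  intro ε hε
  obtain ⟨δ, hδ, hflat⟩ := Metric.eventually_nhds_iff_ball.1
    (hderiv.isLittleO.def (show 0 < ε / 4 by positivity))
  filter_upwards [Metric.ball_mem_nhds x₀ (half_pos hδ)] with x hx
  obtain ⟨v, hv, hgv⟩ := exists_norm_le_inner_eq_mul_norm (gradient U x) (half_pos hδ).le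
  have hxv : ‖x + v - x₀‖ < δ := calc
    ‖x + v - x₀‖ ≤ ‖x - x₀‖ + ‖v‖ := by rw [add_sub_right_comm]; exact norm_add_le _ _
    _ < δ / 2 + δ / 2 := add_lt_add_of_lt_of_le (by rwa [← dist_eq_norm]) hv
    _ = δ := add_halves δ
  have hgrowth := hflat (x + v) (by rwa [Metric.mem_ball, dist_eq_norm])
  simp only [zero_apply, sub_zero, Real.norm_eq_abs] at hgrowth
  have hinner := hU.inner_gradient_le hm x v
  rw [dist_zero_right]
  -- `δ/2 ‖∇U x‖ = ⟪∇U x, v⟫ ≤ U (x + v) - U x ≤ U (x + v) - U x₀ ≤ ε/4 ‖x + v - x₀‖ < ε δ / 4`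
  nlinarith [le_abs_self (U (x + v) - U x₀), hx₀ x]

end IsGradStronglyConvex

end StrongConvexity

theorem eventually_measure_closedBall_lt {X : Type*} [MetricSpace X] [MeasurableSpace X]
    [OpensMeasurableSpace X] (μ : Measure X) [IsFiniteMeasure μ] {x₀ : X} (h : μ {x₀} = 0)
    {c : ℝ≥0∞} (hc : 0 < c) : ∀ᶠ r in 𝓝 (0 : ℝ), μ (Metric.closedBall x₀ r) < c := by
  have hlim := tendsto_measure_cthickening_of_isClosed (μ := μ)
    ⟨1, one_pos, measure_ne_top _ _⟩ (isClosed_singleton (x := x₀))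
  filter_upwards [(h ▸ hlim).eventually_lt_const hc] with r hr
  exact (measure_mono (Metric.closedBall_subset_cthickening_singleton x₀ r)).trans_lt hr

theorem targetProb_singleton {d : ℕ} (hd : 0 < d) (U : Evec d → ℝ) (x₀ : Evec d) :
    targetProb d U {x₀} = 0 := by
  have : Nonempty (Fin d) := ⟨⟨0, hd⟩⟩
  exact targetProb_absolutelyContinuous (measure_singleton x₀)

section Conductance

/-- The inner integral of `rwmConductance`, i.e. `P(x, Aᶜ)`. -/
def rwmEscapeProb (d : ℕ) (U : Evec d → ℝ) (σ : ℝ) (A : Set (Evec d)) (x : Evec d) : ℝ :=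
  ∫ z, Set.indicator Aᶜ (fun _ => (1 : ℝ)) (x + σ • z) *
    min 1 (Real.exp (-(U (x + σ • z) - U x))) ∂stdGauss d

theorem indicator_one_mul_min_one_exp_nonneg {X : Type*} (A : Set X) (y : X) (t : ℝ) :
    0 ≤ A.indicator (fun _ => (1 : ℝ)) y * min 1 (rexp t) :=
  mul_nonneg (Set.indicator_nonneg (fun _ _ => zero_le_one) _) (le_min zero_le_one (exp_pos _).le)

variable {d : ℕ} {U : Evec d → ℝ} {σ : ℝ}

theorem rwmEscapeProb_nonneg (A : Set (Evec d)) (x : Evec d) : 0 ≤ rwmEscapeProb d U σ A x :=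
  integral_nonneg fun _ => indicator_one_mul_min_one_exp_nonneg _ _ _

theorem IsGradStronglyConvex.rwmEscapeProb_le {m : ℝ} (hU : IsGradStronglyConvex m U)
    (hm : 0 ≤ m) (σ : ℝ) (A : Set (Evec d)) (x : Evec d) :
    rwmEscapeProb d U σ A x ≤ (1 + m * σ ^ 2) ^ (-(d : ℝ) / 2) *
      rexp (σ ^ 2 * ‖gradient U x‖ ^ 2 / (2 * (1 + m * σ ^ 2))) := by
  have ht : -1 < m * σ ^ 2 := by nlinarith [sq_nonneg σ]
  have hpoint : ∀ z : Evec d, Set.indicator Aᶜ (fun _ => (1 : ℝ)) (x + σ • z) *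
      min 1 (rexp (-(U (x + σ • z) - U x))) ≤
        rexp (⟪-σ • gradient U x, z⟫ - m * σ ^ 2 / 2 * ‖z‖ ^ 2) := by
    intro z
    have hind : Set.indicator Aᶜ (fun _ => (1 : ℝ)) (x + σ • z) ≤ 1 :=
      Set.indicator_apply_le' (fun _ => le_rfl) (fun _ => zero_le_one)
    have hquad := hU x (σ • z)
    rw [norm_smul, mul_pow, Real.norm_eq_abs, sq_abs, real_inner_smul_right] at hquad
    rw [real_inner_smul_left]
    calc _ ≤ min 1 (rexp (-(U (x + σ • z) - U x))) :=
          mul_le_of_le_one_left (le_min zero_le_one (exp_pos _).le) hind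
      _ ≤ rexp (-(U (x + σ • z) - U x)) := min_le_right _ _
      _ ≤ _ := exp_le_exp.2 (by linarith)
  calc rwmEscapeProb d U σ A x
      ≤ ∫ z, rexp (⟪-σ • gradient U x, z⟫ - m * σ ^ 2 / 2 * ‖z‖ ^ 2) ∂stdGauss d :=
        integral_mono_of_nonneg (.of_forall fun _ => indicator_one_mul_min_one_exp_nonneg _ _ _)
          (integrable_stdGauss_rexp_inner_sub ht _) (.of_forall hpoint)
    _ = _ := by
        rw [integral_stdGauss_rexp_inner_sub ht, norm_smul, mul_pow, norm_neg, Real.norm_eq_abs,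
          sq_abs]

theorem rwmConductance_le_of_escapeProb_le [IsFiniteMeasure (targetProb d U)]
    {A : Set (Evec d)} (hA : MeasurableSet A) (hpos : 0 < targetProb d U A)
    (hhalf : targetProb d U A ≤ 1 / 2) {b : ℝ} (hb : ∀ x ∈ A, rwmEscapeProb d U σ A x ≤ b) :
    rwmConductance d U σ ≤ b := by
  unfold rwmConductance
  refine le_trans (csInf_le ⟨0, ?_⟩ ⟨A, hA, hpos, hhalf, rfl⟩) ?_
  · rintro _ ⟨B, -, -, -, rfl⟩
    exact div_nonneg (integral_nonneg fun x => rwmEscapeProb_nonneg B x) ENNReal.toReal_nonneg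
  · rw [div_le_iff₀ (ENNReal.toReal_pos hpos.ne' (measure_ne_top _ _)), ← measureReal_def]
    refine (Real.le_norm_self _).trans
      (norm_setIntegral_le_of_norm_le_const (measure_lt_top _ A) fun x hx => ?_)
    exact (Real.norm_of_nonneg (rwmEscapeProb_nonneg A x)).trans_le (hb x hx)

theorem IsGradStronglyConvex.rwmConductance_le {m : ℝ} (hU : IsGradStronglyConvex m U)
    (hm : 0 < m) [IsFiniteMeasure (targetProb d U)] [(targetProb d U).IsOpenPosMeasure]
    {x₀ : Evec d} (hx₀ : ∀ x, U x₀ ≤ U x) (hd : DifferentiableAt ℝ U x₀) {ε : ℝ} (hε : 0 < ε)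
    (hhalf : targetProb d U (Metric.closedBall x₀ (ε / m)) ≤ 1 / 2) (σ : ℝ) :
    rwmConductance d U σ ≤
      (1 + m * σ ^ 2) ^ (-(d : ℝ) / 2) * rexp (σ ^ 2 * ε ^ 2 / (2 * (1 + m * σ ^ 2))) := by
  have hmin : IsLocalMin U x₀ := Eventually.of_forall hx₀
  have hgrad₀ : gradient U x₀ = 0 := by simp [gradient, hmin.fderiv_eq_zero]
  refine rwmConductance_le_of_escapeProb_le (A := {x | ‖gradient U x‖ ≤ ε})
    (measurableSet_le (measurable_gradient U).norm measurable_const) ?_ ?_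
    fun x hx => (hU.rwmEscapeProb_le hm.le σ _ x).trans ?_
  · refine Measure.measure_pos_of_mem_nhds _
      ((hU.tendsto_gradient_nhds_zero hm.le hx₀ hd).norm.eventually_le_const ?_)
    rwa [norm_zero]
  · refine (measure_mono fun x (hx : ‖gradient U x‖ ≤ ε) => ?_).trans hhalf
    rw [Metric.mem_closedBall, dist_eq_norm, le_div_iff₀ hm, mul_comm]
    exact (hU.mul_norm_sub_le_norm_gradient hgrad₀ x).trans hx
  · have hx : ‖gradient U x‖ ≤ ε := hx
    gcongr

end Conductance

-- No set has mass in `(0, 1/2]`, and `sInf ∅ = 0`.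
theorem rwmConductance_zero {U : Evec 0 → ℝ} [IsProbabilityMeasure (targetProb 0 U)] (σ : ℝ) :
    rwmConductance 0 U σ = 0 := by
  unfold rwmConductance
  convert Real.sInf_empty
  refine Set.eq_empty_of_forall_notMem ?_
  rintro _ ⟨A, -, hpos, hhalf, -⟩
  obtain ⟨a, ha⟩ := nonempty_of_measure_ne_zero hpos.ne'
  have hA : A = Set.univ := Set.eq_univ_of_forall fun x => Subsingleton.elim a x ▸ ha
  rw [hA, measure_univ] at hhalf
  norm_num at hhalf

theorem stmt12_general {d : ℕ} (m σ : ℝ) (hm : 0 < m)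
    (U : Evec d → ℝ) (hU : Differentiable ℝ U)
    (hconv : ∀ x h : Evec d, m / 2 * ‖h‖ ^ 2 ≤ U (x + h) - U x - ⟪gradient U x, h⟫)
    (hint : Integrable fun x => Real.exp (-U x)) :
    rwmConductance d U σ ≤ (1 + m * σ ^ 2) ^ (-(d : ℝ) / 2) := by
  have hconv : IsGradStronglyConvex m U := hconv
  have hUm : Measurable U := hU.continuous.measurable
  have := isProbabilityMeasure_targetProb hUm hint
  rcases d.eq_zero_or_pos with rfl | hd
  · rw [rwmConductance_zero]
    positivity
  have := isOpenPosMeasure_targetProb hUm hint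
  obtain ⟨x₀, hx₀⟩ := hconv.exists_forall_le hm hU.continuous
  have hsmall : ∀ᶠ ε in 𝓝 0, targetProb d U (Metric.closedBall x₀ (ε / m)) < 1 / 2 :=
    ((continuous_id.div_const m).tendsto' 0 0 (zero_div m)).eventually
      (eventually_measure_closedBall_lt _ (targetProb_singleton hd U x₀) (by norm_num))
  set C := (1 + m * σ ^ 2) ^ (-(d : ℝ) / 2)
  have hbound : ∀ᶠ ε in 𝓝[>] 0,
      rwmConductance d U σ ≤ C * rexp (σ ^ 2 * ε ^ 2 / (2 * (1 + m * σ ^ 2))) := by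
    filter_upwards [self_mem_nhdsWithin, nhdsWithin_le_nhds hsmall] with ε hε hhalf
    exact hconv.rwmConductance_le hm hx₀ (hU x₀) hε hhalf.le σ
  have hlim : Tendsto (fun ε : ℝ => C * rexp (σ ^ 2 * ε ^ 2 / (2 * (1 + m * σ ^ 2))))
      (𝓝[>] 0) (𝓝 C) :=
    ((by fun_prop : Continuous fun ε : ℝ => C * rexp (σ ^ 2 * ε ^ 2 / (2 * (1 + m * σ ^ 2)))
      ).tendsto' 0 C (by simp)).mono_left nhdsWithin_le_nhds
  exact ge_of_tendsto hlim hbound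

/-- Upper bound on the RWM conductance for `m`-strongly convex potentials. -/
theorem stmt12 {d : ℕ} (m σ : ℝ) (hm : 0 < m) (hσ : 0 < σ)
    (U : Evec d → ℝ) (hU : Differentiable ℝ U)
    (hconv : ∀ x h : Evec d, m / 2 * ‖h‖ ^ 2 ≤ U (x + h) - U x - ⟪gradient U x, h⟫)
    (hint : Integrable fun x => Real.exp (-U x)) :
    rwmConductance d U σ ≤ (1 + m * σ ^ 2) ^ (-(d : ℝ) / 2) :=
  stmt12_general m σ hm U hU hconv hint
end
end

section
/- Let $P$ be a $\pi$-reversible positive Markov kernel with $\mathrm{Gap}_R(P)>0$, and let $f\in L^2_0(\pi)$. Then the asymptotic variance $\mathrm{var}(P,f) = \langle f, (\mathrm{Id}+P)(\mathrm{Id}-P)^{-1}f\rangle$ satisfies $\mathrm{var}(P,f) \ge \sup_{g\in L^2_0(\pi)}\{2\langle f,g\rangle - \mathcal{E}(P,g)\}$, and if moreover $\|f\|_2^2 \ge c_1$ and $\mathcal{E}(P,f) \le c_2$ with $c_2 > 0$, then $\mathrm{var}(P,f) \ge (c_1/c_2)\cdot\|f\|_2^2$. -/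
open scoped RealInnerProductSpace

noncomputable section

/-- Variational lower bounds on the asymptotic variance
`var(P,f) = ⟪f, (Id+P)(Id-P)⁻¹ f⟫` of a positive, self-adjoint Markov operator `P` on
the Hilbert space `H = L²₀(π)`, where `S = (Id-P)⁻¹`. -/
theorem stmt14 {H : Type*} [NormedAddCommGroup H] [InnerProductSpace ℝ H]
    [CompleteSpace H]
    (P : H →L[ℝ] H)
    (hself : ∀ f g : H, ⟪P f, g⟫ = ⟪f, P g⟫)
    (hpos : ∀ f : H, 0 ≤ ⟪f, P f⟫)
    (γ : ℝ) (hγ : 0 < γ) (hgap : ∀ f : H, γ * ‖f‖ ^ 2 ≤ ⟪f - P f, f⟫)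
    (S : H →L[ℝ] H) (hS₁ : ∀ f : H, S (f - P f) = f) (hS₂ : ∀ f : H, S f - P (S f) = f)
    (f : H) :
    (∀ g : H, 2 * ⟪f, g⟫ - ⟪g - P g, g⟫ ≤ ⟪f, S f + P (S f)⟫) ∧
    ∀ c₁ c₂ : ℝ, 0 < c₂ → c₁ ≤ ‖f‖ ^ 2 → ⟪f - P f, f⟫ ≤ c₂ →
      (c₁ / c₂) * ‖f‖ ^ 2 ≤ ⟪f, S f + P (S f)⟫ := by
  have hQpos : ∀ v : H, 0 ≤ ⟪v - P v, v⟫ := fun v =>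
    le_trans (by positivity) (hgap v)
  set u := S f with hu
  have hf : u - P u = f := hS₂ f
  -- P is a contraction in quadratic form
  have hcontr : ∀ v : H, ⟪v, P v⟫ ≤ ‖v‖ ^ 2 := by
    intro v
    have h0 := hQpos v
    rw [inner_sub_left, hself v v] at h0
    have h2 : ⟪v, v⟫ = ‖v‖ ^ 2 := real_inner_self_eq_norm_sq v
    linarith
  -- Cauchy-Schwarz for the positive form ⟪x, P y⟫ gives ‖P u‖² ≤ ⟪u, P u⟫
  have hPu : ‖P u‖ ^ 2 ≤ ⟪u, P u⟫ := by
    have hquad : ∀ t : ℝ, 0 ≤ ⟪P u, P (P u)⟫ * (t * t) +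
        (2 * ‖P u‖ ^ 2) * t + ⟪u, P u⟫ := by
      intro t
      have e := hpos (u + t • P u)
      simp only [map_add, map_smul, inner_add_left, inner_add_right,
        real_inner_smul_left, real_inner_smul_right] at e
      have h1 : ⟪P u, P u⟫ = ‖P u‖ ^ 2 := real_inner_self_eq_norm_sq (P u)
      have h2 : ⟪u, P (P u)⟫ = ‖P u‖ ^ 2 := by rw [← hself u (P u), h1]
      rw [h1, h2] at e
      nlinarith [e]
    have hd := discrim_le_zero hquad
    rw [discrim] at hd
    have ha : ⟪P u, P (P u)⟫ ≤ ‖P u‖ ^ 2 := hcontr (P u)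
    have hcnn : 0 ≤ ⟪u, P u⟫ := hpos u
    by_cases h : ‖P u‖ ^ 2 = 0
    · rw [h]; exact hcnn
    · have hp2 : 0 < ‖P u‖ ^ 2 := lt_of_le_of_ne (by positivity) (Ne.symm h)
      nlinarith [hd, ha, hcnn, hp2]
  -- key variational inequality: 2⟪f,g⟫ - ⟪(I-P)g,g⟫ ≤ ⟪f, u⟫
  have key1 : ∀ g : H, 2 * ⟪f, g⟫ - ⟪g - P g, g⟫ ≤ ⟪f, u⟫ := by
    intro g
    have h0 := hQpos (u - g)
    rw [map_sub] at h0
    rw [← hf]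
    simp only [inner_sub_left, inner_sub_right] at h0 ⊢
    have hs1 : ⟪P u, g⟫ = ⟪u, P g⟫ := hself u g
    have hs2 : ⟪P g, u⟫ = ⟪g, P u⟫ := hself g u
    have hc1 : ⟪u, g⟫ = ⟪g, u⟫ := real_inner_comm g u
    have hc2 : ⟪u, P g⟫ = ⟪P g, u⟫ := real_inner_comm (P g) u
    have hc3 : ⟪g, P u⟫ = ⟪P u, g⟫ := real_inner_comm (P u) g
    nlinarith [h0]
  have hvar : ⟪f, S f + P (S f)⟫ = ⟪f, u⟫ + ⟪f, P u⟫ := by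
    rw [inner_add_right]
  have hfPu : 0 ≤ ⟪f, P u⟫ := by
    rw [← hf, inner_sub_left]
    have : ⟪P u, P u⟫ = ‖P u‖ ^ 2 := real_inner_self_eq_norm_sq (P u)
    linarith
  constructor
  · intro g
    have h := key1 g
    rw [hvar]
    linarith
  · intro c₁ c₂ hc₂ hc₁ hE
    set c : ℝ := ‖f‖ ^ 2 / c₂ with hc
    have hkey := key1 (c • f)
    have e1 : ⟪f, c • f⟫ = c * ‖f‖ ^ 2 := by
      rw [real_inner_smul_right, real_inner_self_eq_norm_sq]
    have e2 : ⟪c • f - P (c • f), c • f⟫ = c * c * ⟪f - P f, f⟫ := by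
      rw [map_smul, ← smul_sub, real_inner_smul_left, real_inner_smul_right]
      ring
    rw [e1, e2] at hkey
    have hnorm : (0:ℝ) ≤ ‖f‖ ^ 2 := by positivity
    have hcnn : 0 ≤ c := by positivity
    have hE' : c * c * ⟪f - P f, f⟫ ≤ c * c * c₂ :=
      mul_le_mul_of_nonneg_left hE (by positivity)
    have heq : 2 * (c * ‖f‖ ^ 2) - c * c * c₂ = ‖f‖ ^ 2 * ‖f‖ ^ 2 / c₂ := by
      rw [hc]; field_simp; ring
    have hfinal : (c₁ / c₂) * ‖f‖ ^ 2 ≤ 2 * (c * ‖f‖ ^ 2) - c * c * c₂ := by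
      rw [heq, div_mul_eq_mul_div]
      gcongr
    have : ⟪f, u⟫ ≤ ⟪f, S f + P (S f)⟫ := by rw [hvar]; linarith
    linarith
end
end
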